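/- Let f ∈ L²(ℝ) and let m be a ℤ-periodic measurable function such that m·f̂ ∈ L²(ℝ). Then the function g defined by ĝ = m·f̂ belongs to S(f), the closed linear span of the integer translates of f. -/

import Mathlib

open MeasureTheory FourierTransform

noncomputable section

/-- The space `L²(ℝ)` of complex-valued square-integrable functions. -/
abbrev L2 := Lp ℂ 2 (volume : Measure ℝ)

/-- The translation operator `T_a f (x) = f (x - a)` on `L²(ℝ)`. -/
def Tr (a : ℝ) : L2 → L2 :=
  Lp.compMeasurePreserving (fun x => x - a) (measurePreserving_sub_right volume a)

/-- `F` is the Fourier–Plancherel transform on `L²(ℝ)`: a unitary that agrees with the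
classical Fourier integral `f̂(ω) = ∫ f(x) e^{-2πiωx} dx` on integrable functions. -/
def IsFourierTransform (F : L2 ≃ₗᵢ[ℂ] L2) : Prop :=
  ∀ f : L2, Integrable (f : ℝ → ℂ) volume → (F f : ℝ → ℂ) =ᵐ[volume] 𝓕 (f : ℝ → ℂ)

/-- The shift-invariant space generated by `f`: the closed span of integer translates. -/
def SIS (f : L2) : Set L2 :=
  closure (Submodule.span ℂ {g : L2 | ∃ j : ℤ, g = Tr (j : ℝ) f} : Set L2)

open scoped ENNReal

/-!
Let `ν` be the pushforward of `|f̂(ω)|² dω` to the circle `ℝ/ℤ`. For a `1`-periodic `ψ`,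
`‖ψ f̂‖_{L²(ℝ)} = ‖ψ‖_{L²(ν)}`; in particular `ν` is finite and the periodic function `m` lies in
`L²(ν)`, where trigonometric polynomials are dense. The Fourier transform turns `T_j` into
multiplication by `e^{-2πijω}`, so for a trigonometric polynomial `P = ∑ cₙ eₙ` the function
`P f̂` is the transform of `∑ cₙ T_{-n} f`, and approximating `m` by `P` in `L²(ν)` approximates
`g` by elements of the span of the translates of `f`.
-/

theorem Function.Periodic.measurable_lift {T : ℝ} [Fact (0 < T)] {β : Type*} [MeasurableSpace β]
    {m : ℝ → β} (h : Function.Periodic m T) (hm : Measurable m) : Measurable h.lift := by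
  have : h.lift = m ∘ (↑) ∘ AddCircle.measurableEquivIoc T 0 := by
    funext x
    conv_lhs => rw [← AddCircle.coe_equivIoc (y := x) (a := 0)]
    exact h.lift_coe _
  rw [this]
  exact hm.comp (measurable_subtype_coe.comp (AddCircle.measurableEquivIoc T 0).measurable)

namespace MeasureTheory

variable {α β : Type*} [MeasurableSpace α] [MeasurableSpace β]
  {μ : Measure α} {π : α → β} {φ : α → ℂ} {p : ℝ≥0∞}

theorem eLpNorm_map_withDensity (hπ : Measurable π) (hφ : Measurable φ) {ψ : β → ℂ}
    (hψ : Measurable ψ) (hp0 : p ≠ 0) (hp : p ≠ ∞) :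
    eLpNorm ψ p ((μ.withDensity fun x => ‖φ x‖ₑ ^ p.toReal).map π)
      = eLpNorm (fun x => ψ (π x) * φ x) p μ := by
  rw [eLpNorm_map_measure hψ.aestronglyMeasurable hπ.aemeasurable,
    eLpNorm_eq_lintegral_rpow_enorm_toReal hp0 hp, eLpNorm_eq_lintegral_rpow_enorm_toReal hp0 hp,
    lintegral_withDensity_eq_lintegral_mul _ (hφ.enorm.pow_const _)
      ((hψ.comp hπ).enorm.pow_const _)]
  simp only [Pi.mul_apply, Function.comp_apply, enorm_mul,
    ENNReal.mul_rpow_of_nonneg _ _ ENNReal.toReal_nonneg, mul_comm]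

theorem MemLp.isFiniteMeasure_withDensity (hφ : MemLp φ p μ) (hp0 : p ≠ 0) (hp : p ≠ ∞) :
    IsFiniteMeasure (μ.withDensity fun x => ‖φ x‖ₑ ^ p.toReal) :=
  MeasureTheory.isFiniteMeasure_withDensity
    (lintegral_rpow_enorm_lt_top_of_eLpNorm_lt_top hp0 hp hφ.2).ne

end MeasureTheory

theorem exists_mem_span_fourier_eLpNorm_sub_lt {T : ℝ} [Fact (0 < T)] {p : ℝ≥0∞} [Fact (1 ≤ p)]
    (hp : p ≠ ∞) (ν : Measure (AddCircle T)) [IsFiniteMeasure ν] {ψ : AddCircle T → ℂ}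
    (hψ : MemLp ψ p ν) {ε : ℝ≥0∞} (hε : 0 < ε) :
    ∃ P ∈ Submodule.span ℂ (Set.range (_root_.fourier (T := T))), eLpNorm (ψ - ⇑P) p ν < ε := by
  have hdense := (ContinuousMap.toLp_denseRange ℂ ν ℂ hp).topologicalClosure_map_submodule
    span_fourier_closure_eq_top
  obtain ⟨_, ⟨P, hP, rfl⟩, hPψ⟩ :=
    EMetric.mem_closure_iff.mp (Submodule.eq_top_iff'.mp hdense (hψ.toLp ψ)) ε hε
  refine ⟨P, hP, ?_⟩
  rw [Lp.edist_def] at hPψ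
  refine (eLpNorm_congr_ae ?_).trans_lt hPψ
  filter_upwards [hψ.coeFn_toLp, ContinuousMap.coeFn_toLp (E := ℂ) (p := p) (𝕜 := ℂ) ν P]
    with x hψx hPx
  simp only [Pi.sub_apply, hψx, ContinuousLinearMap.coe_coe, hPx]

theorem fourier_congr_ae {V E : Type*} [NormedAddCommGroup V] [InnerProductSpace ℝ V]
    [MeasurableSpace V] [BorelSpace V] [FiniteDimensional ℝ V] [NormedAddCommGroup E]
    [NormedSpace ℂ E] {u v : V → E} (h : u =ᵐ[volume] v) : 𝓕 u = 𝓕 v := by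
  funext w
  simp only [Real.fourier_eq]
  exact integral_congr_ae (h.mono fun x hx => by simp only [hx])

theorem Real.fourier_comp_sub_right {E : Type*} [NormedAddCommGroup E] [NormedSpace ℂ E]
    (u : ℝ → E) (a : ℝ) : 𝓕 (fun x => u (x - a)) = fun ω => 𝐞 (-(a * ω)) • 𝓕 u ω := by
  funext ω
  have h := congrFun (VectorFourier.fourierIntegral_comp_add_right 𝐞 volume (innerₗ ℝ) u (-a)) ω
  simp only [innerₗ_apply_apply, Real.inner_apply, Function.comp_def, ← sub_eq_add_neg,
    neg_mul] at h
  exact h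

theorem Real.fourierChar_neg_intCast_mul_eq_fourier (n : ℤ) (ω : ℝ) :
    (𝐞 (-((-n : ℤ) * ω)) : ℂ) = _root_.fourier n (ω : UnitAddCircle) := by
  rw [fourier_coe_apply, Real.fourierChar_apply]
  push_cast
  ring_nf

theorem memLp_top_fourierChar (a : ℝ) :
    MemLp (fun ω : ℝ => (𝐞 (-(a * ω)) : ℂ)) ∞ volume :=
  have hcont : Continuous fun ω : ℝ => (𝐞 (-(a * ω)) : ℂ) :=
    (Real.continuous_fourierChar.comp (continuous_const_mul a).neg).subtype_val
  memLp_top_of_bound hcont.aestronglyMeasurable 1 (ae_of_all _ fun _ => (Circle.norm_coe _).le)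

def modulation (a : ℝ) : L2 →L[ℂ] L2 :=
  (ContinuousLinearMap.mul ℂ ℂ).holderL volume ∞ 2 2 (memLp_top_fourierChar a).toLp

theorem coeFn_modulation (a : ℝ) (v : L2) :
    modulation a v =ᵐ[volume] fun ω => 𝐞 (-(a * ω)) * v ω := by
  rw [modulation, ContinuousLinearMap.holderL_apply_apply]
  filter_upwards [(ContinuousLinearMap.mul ℂ ℂ).coeFn_holder (r := 2)
    (memLp_top_fourierChar a).toLp v, (memLp_top_fourierChar a).coeFn_toLp] with ω h1 h2
  simp [h1, h2]

theorem coeFn_Tr (a : ℝ) (u : L2) : Tr a u =ᵐ[volume] fun x => u (x - a) :=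
  Lp.coeFn_compMeasurePreserving u _

theorem continuous_Tr (a : ℝ) : Continuous (Tr a) :=
  (Lp.isometry_compMeasurePreserving (measurePreserving_sub_right volume a)).continuous

namespace IsFourierTransform

variable {F : L2 ≃ₗᵢ[ℂ] L2}

theorem map_Tr_of_integrable (hF : IsFourierTransform F) (a : ℝ) {u : L2}
    (hu : Integrable u volume) : F (Tr a u) = modulation a (F u) := by
  have hTr := coeFn_Tr a u
  have hTu : Integrable (Tr a u) volume :=
    (((measurePreserving_sub_right volume a).integrable_comp hu.aestronglyMeasurable).mpr
      hu).congr hTr.symm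
  refine Lp.ext ?_
  filter_upwards [hF _ hTu, hF u hu, coeFn_modulation a (F u)] with ω hTω huω hmω
  rw [hTω, hmω, huω, fourier_congr_ae hTr, Real.fourier_comp_sub_right]
  exact Circle.smul_def _ _

theorem map_Tr (hF : IsFourierTransform F) (a : ℝ) (u : L2) :
    F (Tr a u) = modulation a (F u) := by
  refine (Lp.simpleFunc.denseRange (E := ℂ) (μ := (volume : Measure ℝ)) (p := 2)
    ENNReal.ofNat_ne_top).induction_on u
    (isClosed_eq (F.continuous.comp (continuous_Tr a))
      ((modulation a).continuous.comp F.continuous))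
    fun s => hF.map_Tr_of_integrable a ?_
  exact ((SimpleFunc.memLp_iff_integrable two_ne_zero ENNReal.ofNat_ne_top).mp
    (Lp.simpleFunc.memLp s)).congr (Lp.simpleFunc.toSimpleFunc_eq_toFun s)

theorem exists_mem_span_Tr_map_eq_mul (hF : IsFourierTransform F) (f : L2) {P : C(UnitAddCircle, ℂ)}
    (hP : P ∈ Submodule.span ℂ (Set.range (_root_.fourier (T := 1)))) :
    ∃ b ∈ Submodule.span ℂ {g : L2 | ∃ j : ℤ, g = Tr (j : ℝ) f},
      F b =ᵐ[volume] fun ω => P ω * F f ω := by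
  induction hP using Submodule.span_induction with
  | mem _ hP =>
    obtain ⟨n, rfl⟩ := hP
    refine ⟨Tr ((-n : ℤ) : ℝ) f, Submodule.subset_span ⟨-n, rfl⟩, ?_⟩
    filter_upwards [hF.map_Tr _ f ▸ coeFn_modulation _ (F f)] with ω h
    rw [h, Real.fourierChar_neg_intCast_mul_eq_fourier]
  | zero =>
    refine ⟨0, zero_mem _, ?_⟩
    filter_upwards [map_zero F ▸ Lp.coeFn_zero ℂ 2 volume] with ω h
    rw [h, Pi.zero_apply, ContinuousMap.zero_apply, zero_mul]
  | add P Q _ _ hP hQ =>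
    obtain ⟨b, hb, hbP⟩ := hP
    obtain ⟨c, hc, hcQ⟩ := hQ
    refine ⟨b + c, add_mem hb hc, ?_⟩
    filter_upwards [map_add F b c ▸ Lp.coeFn_add (F b) (F c), hbP, hcQ] with ω h hbω hcω
    rw [h, Pi.add_apply, hbω, hcω, ContinuousMap.add_apply, add_mul]
  | smul z P _ hP =>
    obtain ⟨b, hb, hbP⟩ := hP
    refine ⟨z • b, Submodule.smul_mem _ z hb, ?_⟩
    filter_upwards [map_smul F z b ▸ Lp.coeFn_smul z (F b), hbP] with ω h hbω
    rw [h, Pi.smul_apply, hbω, ContinuousMap.smul_apply, smul_eq_mul, smul_eq_mul, mul_assoc]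

end IsFourierTransform

theorem stmt6 (F : L2 ≃ₗᵢ[ℂ] L2) (hF : IsFourierTransform F)
    (f : L2) (m : ℝ → ℂ) (hm : Measurable m)
    (hper : ∀ ω : ℝ, ∀ k : ℤ, m (ω + k) = m ω)
    (hL2 : MemLp (fun ω => m ω * (F f : ℝ → ℂ) ω) 2 volume)
    (g : L2) (hgdef : (F g : ℝ → ℂ) =ᵐ[volume] fun ω => m ω * (F f : ℝ → ℂ) ω) :
    g ∈ SIS f := by
  set ν : Measure UnitAddCircle :=
    (volume.withDensity fun ω => ‖(F f : ℝ → ℂ) ω‖ₑ ^ (2 : ℝ≥0∞).toReal).map (↑)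
  have := (Lp.memLp (F f)).isFiniteMeasure_withDensity two_ne_zero ENNReal.ofNat_ne_top
  have hν (ψ : UnitAddCircle → ℂ) (hψ : Measurable ψ) :
      eLpNorm ψ 2 ν = eLpNorm (fun ω : ℝ => ψ ω * F f ω) 2 volume :=
    eLpNorm_map_withDensity AddCircle.measurable_mk' (Lp.stronglyMeasurable _).measurable hψ
      two_ne_zero ENNReal.ofNat_ne_top
  have hper1 : Function.Periodic m 1 := fun ω => by simpa using hper ω 1
  have hM := hper1.measurable_lift hm
  have hMmem : MemLp hper1.lift 2 ν :=
    ⟨hM.aestronglyMeasurable, by simpa only [hν _ hM, hper1.lift_coe] using hL2.2⟩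
  refine EMetric.mem_closure_iff.mpr fun ε hε => ?_
  obtain ⟨P, hP, hPε⟩ := exists_mem_span_fourier_eLpNorm_sub_lt ENNReal.ofNat_ne_top ν hMmem hε
  obtain ⟨b, hb, hFb⟩ := hF.exists_mem_span_Tr_map_eq_mul f hP
  refine ⟨b, hb, ?_⟩
  calc edist g b = edist (F g) (F b) := (F.isometry.edist_eq g b).symm
    _ = eLpNorm (fun ω : ℝ => (hper1.lift - ⇑P) ω * F f ω) 2 volume := by
      rw [Lp.edist_def]
      refine eLpNorm_congr_ae ?_
      filter_upwards [hgdef, hFb] with ω hgω hbω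
      rw [Pi.sub_apply, Pi.sub_apply, hgω, hbω, hper1.lift_coe, sub_mul]
    _ = eLpNorm (hper1.lift - ⇑P) 2 ν := (hν _ (hM.sub P.continuous.measurable)).symm
    _ < ε := hPε
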